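/- For every formula χ of the language L∀∃, MS4 ⊢ χ^t → □χ^t, where (−)^t is the Gödel translation. -/
import Mathlib


/-- Formulas of the monadic intuitionistic language `L∀∃`. -/
inductive MForm : Type
  | var : Nat → MForm
  | bot : MForm
  | and : MForm → MForm → MForm
  | or  : MForm → MForm → MForm
  | imp : MForm → MForm → MForm
  | all : MForm → MForm
  | ex  : MForm → MForm

/-- Intuitionistic negation `¬φ := φ → ⊥`. -/
def MForm.neg (φ : MForm) : MForm := φ.imp MForm.bot

/-- Biconditional `φ ↔ ψ := (φ → ψ) ∧ (ψ → φ)`. -/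
def MForm.iff (φ ψ : MForm) : MForm := (φ.imp ψ).and (ψ.imp φ)

/-- Formulas of the bimodal language `L□∀` with modalities `□` and `∀`. -/
inductive BForm : Type
  | var : Nat → BForm
  | bot : BForm
  | and : BForm → BForm → BForm
  | or  : BForm → BForm → BForm
  | imp : BForm → BForm → BForm
  | box : BForm → BForm
  | all : BForm → BForm

def BForm.neg (φ : BForm) : BForm := φ.imp BForm.bot
def BForm.iff (φ ψ : BForm) : BForm := (φ.imp ψ).and (ψ.imp φ)
/-- `◇φ := ¬□¬φ`. -/
def BForm.dia (φ : BForm) : BForm := ((φ.neg).box).neg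
/-- `∃φ := ¬∀¬φ`. -/
def BForm.ex (φ : BForm) : BForm := ((φ.neg).all).neg

/-- The monadic S4 logic `MS4`: classical propositional logic with S4-axioms for
`□`, S5-axioms for `∀`, and the left commutativity axiom `□∀p → ∀□p`, closed
under modus ponens, `□`-necessitation and `∀`-necessitation (axioms are given
as schemes, hence closure under uniform substitution is automatic). -/
inductive MS4 : BForm → Prop
  -- classical propositional axioms
  | a1 (φ ψ : BForm) : MS4 (φ.imp (ψ.imp φ))
  | a2 (φ ψ χ : BForm) : MS4 ((φ.imp (ψ.imp χ)).imp ((φ.imp ψ).imp (φ.imp χ)))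
  | a3 (φ ψ : BForm) : MS4 ((φ.and ψ).imp φ)
  | a4 (φ ψ : BForm) : MS4 ((φ.and ψ).imp ψ)
  | a5 (φ ψ : BForm) : MS4 (φ.imp (ψ.imp (φ.and ψ)))
  | a6 (φ ψ : BForm) : MS4 (φ.imp (φ.or ψ))
  | a7 (φ ψ : BForm) : MS4 (ψ.imp (φ.or ψ))
  | a8 (φ ψ χ : BForm) : MS4 ((φ.imp χ).imp ((ψ.imp χ).imp ((φ.or ψ).imp χ)))
  | a9 (φ : BForm) : MS4 (BForm.bot.imp φ)
  | dne (φ : BForm) : MS4 ((φ.neg.neg).imp φ)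
  -- S4-axioms for □
  | boxK (φ ψ : BForm) : MS4 (((φ.imp ψ).box).imp ((φ.box).imp ψ.box))
  | boxT (φ : BForm) : MS4 ((φ.box).imp φ)
  | box4 (φ : BForm) : MS4 ((φ.box).imp φ.box.box)
  -- S5-axioms for ∀
  | allK (φ ψ : BForm) : MS4 (((φ.imp ψ).all).imp ((φ.all).imp ψ.all))
  | allT (φ : BForm) : MS4 ((φ.all).imp φ)
  | all4 (φ : BForm) : MS4 ((φ.all).imp φ.all.all)
  | allB (φ : BForm) : MS4 (φ.imp (φ.ex.all))
  -- left commutativity axiom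
  | comm (φ : BForm) : MS4 ((φ.all.box).imp (φ.box.all))
  -- rules
  | mp (φ ψ : BForm) : MS4 (φ.imp ψ) → MS4 φ → MS4 ψ
  | necBox (φ : BForm) : MS4 φ → MS4 φ.box
  | necAll (φ : BForm) : MS4 φ → MS4 φ.all

/-- The Gödel translation `(−)^t : L∀∃ → L□∀`. -/
def godel : MForm → BForm
  | .var n => (BForm.var n).box
  | .bot => BForm.bot
  | .and φ ψ => (godel φ).and (godel ψ)
  | .or φ ψ => (godel φ).or (godel ψ)
  | .imp φ ψ => (((godel φ).neg).or (godel ψ)).box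
  | .all φ => ((godel φ).all).box
  | .ex φ => (godel φ).ex

namespace MS4Lemmas

open MS4 BForm

/-- `⊢ φ → φ`. -/
theorem imp_id (φ : BForm) : MS4 (φ.imp φ) :=
  mp _ _ (mp _ _ (a2 φ (φ.imp φ) φ) (a1 φ (φ.imp φ))) (a1 φ φ)

/-- Hypothetical syllogism. -/
theorem trans {φ ψ χ : BForm} (h1 : MS4 (φ.imp ψ)) (h2 : MS4 (ψ.imp χ)) :
    MS4 (φ.imp χ) :=
  mp _ _ (mp _ _ (a2 φ ψ χ) (mp _ _ (a1 (ψ.imp χ) φ) h2)) h1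

/-- From `⊢ φ → (ψ → χ)` and `⊢ φ → ψ` infer `⊢ φ → χ`. -/
theorem mp_in {φ ψ χ : BForm} (h1 : MS4 (φ.imp (ψ.imp χ))) (h2 : MS4 (φ.imp ψ)) :
    MS4 (φ.imp χ) :=
  mp _ _ (mp _ _ (a2 φ ψ χ) h1) h2

/-- Flip: from `⊢ φ → (ψ → χ)` infer `⊢ ψ → (φ → χ)`. -/
theorem flip {φ ψ χ : BForm} (h : MS4 (φ.imp (ψ.imp χ))) :
    MS4 (ψ.imp (φ.imp χ)) :=
  trans (a1 ψ φ) (mp _ _ (a2 φ ψ χ) h)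

/-- Double negation introduction. -/
theorem dni (φ : BForm) : MS4 (φ.imp φ.neg.neg) :=
  flip (imp_id φ.neg)

/-- Contraposition (meta). -/
theorem cp {φ ψ : BForm} (h : MS4 (φ.imp ψ)) : MS4 (ψ.neg.imp φ.neg) :=
  flip (trans h (flip (imp_id ψ.neg)))

/-- Reverse contraposition (meta). -/
theorem cp2 {φ ψ : BForm} (h : MS4 (φ.neg.imp ψ.neg)) : MS4 (ψ.imp φ) :=
  trans (trans (dni ψ) (cp h)) (dne φ)

theorem boxMono {φ ψ : BForm} (h : MS4 (φ.imp ψ)) : MS4 (φ.box.imp ψ.box) :=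
  mp _ _ (boxK φ ψ) (necBox _ h)

theorem allMono {φ ψ : BForm} (h : MS4 (φ.imp ψ)) : MS4 (φ.all.imp ψ.all) :=
  mp _ _ (allK φ ψ) (necAll _ h)

theorem exMono {φ ψ : BForm} (h : MS4 (φ.imp ψ)) : MS4 (φ.ex.imp ψ.ex) :=
  cp (allMono (cp h))

/-- In S5 (for `∀`): `⊢ ∃∀φ → φ`. -/
theorem exAllElim (φ : BForm) : MS4 (φ.all.ex.imp φ) :=
  trans
    (cp (trans (allB φ.neg) (allMono (cp (allMono (dni φ))))))
    (dne φ)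

/-- Key MS4 lemma: `⊢ ∃□φ → □∃φ`. -/
theorem exBox (φ : BForm) : MS4 (φ.box.ex.imp φ.ex.box) :=
  trans (exMono (trans (boxMono (allB φ)) (comm φ.ex))) (exAllElim φ.ex.box)

end MS4Lemmas

/-- For every `L∀∃`-formula `χ`, `MS4 ⊢ χ^t → □χ^t`. -/
theorem godel_translation_boxed (χ : MForm) :
    MS4 ((godel χ).imp ((godel χ).box)) := by
  open MS4 MS4Lemmas in
  induction χ with
  | var n => exact box4 _
  | bot => exact a9 _
  | and φ ψ ihφ ihψ =>
      exact mp_in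
        (trans (trans (a3 _ _) ihφ)
          (trans (mp _ _ (boxK _ _) (necBox _ (a5 (godel φ) (godel ψ)))) (boxK _ _)))
        (trans (a4 _ _) ihψ)
  | or φ ψ ihφ ihψ =>
      exact mp _ _
        (mp _ _ (a8 (godel φ) (godel ψ) (((godel φ).or (godel ψ)).box))
          (trans ihφ (boxMono (a6 _ _))))
        (trans ihψ (boxMono (a7 _ _)))
  | imp φ ψ _ _ => exact box4 _
  | all φ _ => exact box4 _
  | ex φ ih => exact trans (exMono ih) (exBox (godel φ))
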